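/- arXiv:1404.2810 — 2 statements merged into one kernel-verified Lean document; each statement's English description precedes it below -/
import Mathlib

section
/- Let fᵢ ∈ C¹(S) for i = 1,…,n, λ(u) = min_i fᵢ(u), and ε > 0. Let u ∈ S and suppose y ∈ ℝⁿ, ‖y‖ = 1, satisfies ⟨∇fᵢ(u), y⟩ = c > 0 for all i ∈ N_ε(u), where N_ε(u) = {i : fᵢ(u) − λ(u) < ε}. Then there exists τ₀ > 0 such that λ(u + τy) > λ(u) for all τ ∈ (0, τ₀). -/
open Set Filter Topology

/-
Every index with fᵢ(u) − λ(u) ≥ ε stays strictly above λ(u) near u by continuity, and every index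
in N_ε(u) starts out at or above λ(u) and strictly increases along y, its directional derivative
being c > 0. Each of the finitely many fᵢ(u + τy) thus exceeds λ(u) for small τ > 0, hence so
does their minimum λ(u + τy).
-/

theorem HasDerivAt.eventually_nhdsGT_lt {g : ℝ → ℝ} {c x : ℝ} (hg : HasDerivAt g c x)
    (hc : 0 < c) : ∀ᶠ t in 𝓝[>] x, g x < g t := by
  have hslope : ∀ᶠ t in 𝓝[>] x, 0 < slope g x t :=
    ((hasDerivAt_iff_tendsto_slope.mp hg).mono_left
      (nhdsWithin_mono _ fun _ ht => ne_of_gt ht)).eventually_const_lt hc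
  filter_upwards [hslope, self_mem_nhdsWithin] with t hpos hxt
  exact (slope_pos_iff hxt).mp hpos

theorem DifferentiableAt.eventually_lt_add_smul_of_fderiv_pos {E : Type*} [NormedAddCommGroup E]
    [NormedSpace ℝ E] {f : E → ℝ} {u y : E} (hf : DifferentiableAt ℝ f u)
    (hy : 0 < fderiv ℝ f u y) : ∀ᶠ τ in 𝓝[>] (0 : ℝ), f u < f (u + τ • y) := by
  have hline : HasDerivAt (fun τ : ℝ => u + τ • y) y 0 := by
    simpa using ((hasDerivAt_id (0 : ℝ)).smul_const y).const_add u
  have hcomp : HasDerivAt (fun τ : ℝ => f (u + τ • y)) (fderiv ℝ f u y) 0 := by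
    refine HasFDerivAt.comp_hasDerivAt (0 : ℝ) ?_ hline
    simpa using hf.hasFDerivAt
  simpa using hcomp.eventually_nhdsGT_lt hy

theorem Filter.Eventually.lt_ciInf_of_finite {α ι β : Type*} [ConditionallyCompleteLinearOrder β]
    [Finite ι] [Nonempty ι] {l : Filter α} {a : β} {g : ι → α → β}
    (h : ∀ i, ∀ᶠ x in l, a < g i x) : ∀ᶠ x in l, a < ⨅ i, g i x := by
  filter_upwards [eventually_all.mpr h] with x hx
  obtain ⟨j, hj⟩ := exists_eq_ciInf_of_finite (f := fun i => g i x)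
  exact hj ▸ hx j

theorem stmt_13_general (n : ℕ) (hn : 0 < n) (S : Set (Fin n → ℝ)) (hS : IsOpen S)
    (f : Fin n → (Fin n → ℝ) → ℝ)
    (hf : ∀ i, ContDiffOn ℝ 1 (f i) S)
    (lam : (Fin n → ℝ) → ℝ)
    (hlam : ∀ v, lam v = ⨅ i, f i v)
    (u : Fin n → ℝ) (hu : u ∈ S) (ε : ℝ) (hε : 0 < ε)
    (y : Fin n → ℝ) (c : ℝ) (hc : 0 < c)
    (hgrad : ∀ i, f i u - lam u < ε → fderiv ℝ (f i) u y = c) :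
    ∃ τ₀ > 0, ∀ τ ∈ Ioo (0 : ℝ) τ₀, lam u < lam (u + τ • y) := by
  have : Nonempty (Fin n) := ⟨⟨0, hn⟩⟩
  have hdiff (i : Fin n) : DifferentiableAt ℝ (f i) u :=
    ((hf i).contDiffAt (hS.mem_nhds hu)).differentiableAt one_ne_zero
  have hlam_le (i : Fin n) : lam u ≤ f i u := hlam u ▸ ciInf_le (Finite.bddBelow_range _) i
  have hbranch (i : Fin n) : ∀ᶠ τ in 𝓝[>] (0 : ℝ), lam u < f i (u + τ • y) := by
    by_cases hact : f i u - lam u < ε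
    · filter_upwards [(hdiff i).eventually_lt_add_smul_of_fderiv_pos (hgrad i hact ▸ hc)]
        with τ hτ using (hlam_le i).trans_lt hτ
    · have hcont : ContinuousAt (fun τ : ℝ => f i (u + τ • y)) 0 :=
        ContinuousAt.comp (by simpa using (hdiff i).continuousAt) (by fun_prop)
      exact nhdsWithin_le_nhds (hcont.eventually_const_lt (by simp only [zero_smul, add_zero]; linarith))
  have hmin := Eventually.lt_ciInf_of_finite hbranch
  simp_rw [← hlam] at hmin
  obtain ⟨τ₀, hτ₀, hsub⟩ := mem_nhdsGT_iff_exists_Ioo_subset.mp hmin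
  exact ⟨τ₀, hτ₀, hsub⟩

/-- If the unit vector y satisfies ⟨∇fᵢ(u), y⟩ = c > 0 for every i in the ε-active set
N_ε(u), then λ(u + τy) > λ(u) for all sufficiently small τ > 0. -/
theorem stmt_13 (n : ℕ) (hn : 0 < n) (S : Set (Fin n → ℝ)) (hS : IsOpen S)
    (f : Fin n → (Fin n → ℝ) → ℝ)
    (hf : ∀ i, ContDiffOn ℝ 1 (f i) S)
    (lam : (Fin n → ℝ) → ℝ)
    (hlam : ∀ v, lam v = ⨅ i, f i v)
    (u : Fin n → ℝ) (hu : u ∈ S) (ε : ℝ) (hε : 0 < ε)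
    (y : Fin n → ℝ) (hy : ‖y‖ = 1) (c : ℝ) (hc : 0 < c)
    (hgrad : ∀ i, f i u - lam u < ε → fderiv ℝ (f i) u y = c) :
    ∃ τ₀ > 0, ∀ τ ∈ Ioo (0 : ℝ) τ₀, lam u < lam (u + τ • y) :=
  stmt_13_general n hn S hS f hf lam hlam u hu ε hε y c hc hgrad
end

section
/- Let v₁,…,v_N ∈ ℝⁿ and let Z = Nr conv{v₁,…,v_N} be the point of minimal Euclidean norm in the convex hull. Then for any unit vector d, min_i ⟨vᵢ, d⟩ ≤ ‖Z‖, and if Z ≠ 0 then equality holds for d = Z/‖Z‖, i.e. max_{‖d‖=1} min_i ⟨vᵢ, d⟩ = ‖Z‖. -/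
open scoped RealInnerProductSpace

/-! Every linear functional `⟪·, d⟫` with `‖d‖ = 1` is bounded below on `conv{vᵢ}` by its minimum over
the vertices, so that minimum is at most `⟪Z, d⟫ ≤ ‖Z‖`. Conversely, the minimal-norm point `Z`
satisfies the variational inequality `⟪Z, w - Z⟫ ≥ 0` on the hull, i.e. `⟪vᵢ, Z⟫ ≥ ‖Z‖²` for every
vertex, which is the bound needed for `d = Z / ‖Z‖`. -/

section

variable {E : Type*} [NormedAddCommGroup E] [InnerProductSpace ℝ E]

theorem Convex.sq_norm_le_inner_of_forall_norm_le {K : Set E} (hK : Convex ℝ K) {z : E}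
    (hz : z ∈ K) (hmin : ∀ w ∈ K, ‖z‖ ≤ ‖w‖) {w : E} (hw : w ∈ K) : ‖z‖ ^ 2 ≤ ⟪z, w⟫ := by
  have : Nonempty K := ⟨⟨z, hz⟩⟩
  have hproj : ‖0 - z‖ = ⨅ w : K, ‖0 - (w : E)‖ := by
    simp only [zero_sub, norm_neg]
    exact le_antisymm (le_ciInf fun w => hmin w w.2)
      (ciInf_le ⟨0, by rintro _ ⟨w, rfl⟩; positivity⟩ (⟨z, hz⟩ : K))
  have hvar := (norm_eq_iInf_iff_real_inner_le_zero hK hz).mp hproj w hw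
  rw [zero_sub, inner_neg_left, inner_sub_right, real_inner_self_eq_norm_sq] at hvar
  linarith

theorem iInf_inner_le_inner_of_mem_convexHull {ι : Type*} [Finite ι] (v : ι → E) (d : E)
    {w : E} (hw : w ∈ convexHull ℝ (Set.range v)) : ⨅ i, ⟪v i, d⟫ ≤ ⟪w, d⟫ := by
  have hhalf : convexHull ℝ (Set.range v) ⊆ {x | ⨅ i, ⟪v i, d⟫ ≤ ⟪x, d⟫} := by
    refine convexHull_min ?_ (convex_halfSpace_ge
      ⟨fun x y => inner_add_left x y d, fun r x => real_inner_smul_left x d r⟩ _)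
    rintro _ ⟨i, rfl⟩
    exact ciInf_le (Set.finite_range fun i => ⟪v i, d⟫).bddBelow i
  exact hhalf hw

end

theorem stmt_16_general (n N : ℕ) (v : Fin N → EuclideanSpace ℝ (Fin n))
    (Z : EuclideanSpace ℝ (Fin n))
    (hZmem : Z ∈ convexHull ℝ (Set.range v))
    (hZmin : ∀ w ∈ convexHull ℝ (Set.range v), ‖Z‖ ≤ ‖w‖) :
    (∀ d : EuclideanSpace ℝ (Fin n), ‖d‖ = 1 → (⨅ i, ⟪v i, d⟫) ≤ ‖Z‖) ∧
      (Z ≠ 0 → (⨅ i, ⟪v i, ‖Z‖⁻¹ • Z⟫) = ‖Z‖) := by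
  have hupper : ∀ d : EuclideanSpace ℝ (Fin n), ‖d‖ = 1 → (⨅ i, ⟪v i, d⟫) ≤ ‖Z‖ := fun d hd =>
    calc (⨅ i, ⟪v i, d⟫) ≤ ⟪Z, d⟫ := iInf_inner_le_inner_of_mem_convexHull v d hZmem
      _ ≤ ‖Z‖ * ‖d‖ := real_inner_le_norm Z d
      _ = ‖Z‖ := by rw [hd, mul_one]
  refine ⟨hupper, fun hZ => ?_⟩
  have : Nonempty (Fin N) :=
    Set.range_nonempty_iff_nonempty.mp (convexHull_nonempty_iff.mp ⟨Z, hZmem⟩)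
  have hZpos : 0 < ‖Z‖ := norm_pos_iff.mpr hZ
  refine le_antisymm (hupper _ (norm_smul_inv_norm hZ)) (le_ciInf fun i => ?_)
  have hvertex : ‖Z‖ ^ 2 ≤ ⟪Z, v i⟫ := (convex_convexHull ℝ _).sq_norm_le_inner_of_forall_norm_le
    hZmem hZmin (subset_convexHull ℝ _ ⟨i, rfl⟩)
  rw [real_inner_smul_right, real_inner_comm, le_inv_mul_iff₀ hZpos, ← sq]
  exact hvertex

/-- Demyanov–Malozemov: if Z is the minimal-norm point of conv{v₁,…,v_N}, then for every
unit vector d, min_i ⟨vᵢ, d⟩ ≤ ‖Z‖, with equality for d = Z/‖Z‖ when Z ≠ 0. -/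
theorem stmt_16 (n N : ℕ) (hN : 0 < N) (v : Fin N → EuclideanSpace ℝ (Fin n))
    (Z : EuclideanSpace ℝ (Fin n))
    (hZmem : Z ∈ convexHull ℝ (Set.range v))
    (hZmin : ∀ w ∈ convexHull ℝ (Set.range v), ‖Z‖ ≤ ‖w‖) :
    (∀ d : EuclideanSpace ℝ (Fin n), ‖d‖ = 1 → (⨅ i, ⟪v i, d⟫) ≤ ‖Z‖) ∧
      (Z ≠ 0 → (⨅ i, ⟪v i, ‖Z‖⁻¹ • Z⟫) = ‖Z‖) :=
  stmt_16_general n N v Z hZmem hZmin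
end
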